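/- Let d : ℕ → A (A = Fin m) satisfy σ^i d ⪯ d for every i ∈ ℕ. Then there exist m' ≥ 1 and an admissible sequence d' : ℕ → Fin m' such that for all n ≥ 1, the number of distinct predecessor sets of words of length n in X_{d'} equals Φ_n(d): |P_{X_{d'}}(n)| = Φ_n(d). -/

import Mathlib

namespace BetaShift

variable {A : Type*}

/-- The shift map: `(shift x) n = x (n+1)`. -/
def shift (x : ℕ → A) : ℕ → A := fun n => x (n + 1)

/-- Lexicographic order on one-sided sequences: `x = y`, or there is an index `i`
such that `x j = y j` for all `j < i` and `x i < y i`. -/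
def SeqLe [LinearOrder A] (x y : ℕ → A) : Prop :=
  x = y ∨ ∃ i, (∀ j, j < i → x j = y j) ∧ x i < y i

/-- A word `w` occurs in the sequence `x`. -/
def Occurs (w : List A) (x : ℕ → A) : Prop :=
  ∃ i : ℕ, ∀ j : Fin w.length, x (i + j) = w.get j

/-- `Complexity x n` is the number `Φ_n(x)` of distinct words of length `n` occurring in `x`. -/
noncomputable def Complexity (x : ℕ → A) (n : ℕ) : ℕ :=
  Set.ncard {w : List A | w.length = n ∧ Occurs w x}

/-- A sequence is eventually periodic if there are `p ≥ 1` and `N` with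
`d (i + p) = d i` for all `i ≥ N`. -/
def EventuallyPeriodic (d : ℕ → A) : Prop :=
  ∃ p, 1 ≤ p ∧ ∃ N, ∀ i, N ≤ i → d (i + p) = d i

/-- `(d)_k`, the `k`-letter prefix of the sequence `d`, as a word. -/
def prefixWord (d : ℕ → A) (k : ℕ) : List A := List.ofFn (fun i : Fin k => d i)

variable {m : ℕ}

/-- `d` is admissible: every shift of `d` is lexicographically ≤ `d`,
and `d` is not eventually `0`. -/
def Admissible (d : ℕ → Fin m) : Prop :=
  (∀ i, SeqLe (shift^[i] d) d) ∧ ∀ N, ∃ i, N ≤ i ∧ (d i).val ≠ 0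

/-- The one-sided β-shift `X_d` determined by the admissible sequence `d`. -/
def XSet (d : ℕ → Fin m) : Set (ℕ → Fin m) :=
  {x | ∀ i, SeqLe (shift^[i] x) d}

/-- The language of `X_d`: all words occurring in some point of `X_d`. -/
def Lang (d : ℕ → Fin m) : Set (List (Fin m)) :=
  {w | ∃ x ∈ XSet d, Occurs w x}

/-- The follower set of the word `w` in `X_d`. -/
def Fol (d : ℕ → Fin m) (w : List (Fin m)) : Set (List (Fin m)) :=
  {u | w ++ u ∈ Lang d}

/-- The predecessor set of the word `w` in `X_d`. -/
def Pred (d : ℕ → Fin m) (w : List (Fin m)) : Set (List (Fin m)) :=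
  {s | s ++ w ∈ Lang d}

/-- The extender set of the word `w` in `X_d`. -/
def Ext (d : ℕ → Fin m) (w : List (Fin m)) : Set (List (Fin m) × List (Fin m)) :=
  {p | p.1 ++ w ++ p.2 ∈ Lang d}

/-- `|F(n)|`: the number of distinct follower sets of words of length `n` in `X_d`. -/
noncomputable def FolCount (d : ℕ → Fin m) (n : ℕ) : ℕ :=
  Set.ncard {S | ∃ w ∈ Lang d, w.length = n ∧ S = Fol d w}

/-- `|P(n)|`: the number of distinct predecessor sets of words of length `n` in `X_d`. -/
noncomputable def PredCount (d : ℕ → Fin m) (n : ℕ) : ℕ :=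
  Set.ncard {S | ∃ w ∈ Lang d, w.length = n ∧ S = Pred d w}

/-- `|E(n)|`: the number of distinct extender sets of words of length `n` in `X_d`. -/
noncomputable def ExtCount (d : ℕ → Fin m) (n : ℕ) : ℕ :=
  Set.ncard {S | ∃ w ∈ Lang d, w.length = n ∧ S = Ext d w}

/-- The largest `k ≤ n` such that the `k`-letter prefix of `d` is a suffix of `v`
(`k = 0`, the empty prefix, always works). -/
def classIndex (d : ℕ → Fin m) (n : ℕ) (v : List (Fin m)) : ℕ :=
  Nat.findGreatest (fun k => prefixWord d k <:+ v) n

/-- Lexicographic comparison of (equal-length) words: `u = v`, or at the first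
index where they differ, `u` takes the smaller value. -/
def WordLe [LinearOrder A] (u v : List A) : Prop :=
  u = v ∨ ∃ i, ∃ (hu : i < u.length) (hv : i < v.length),
    (∀ j (hju : j < u.length) (hjv : j < v.length), j < i → u.get ⟨j, hju⟩ = v.get ⟨j, hjv⟩) ∧
    u.get ⟨i, hu⟩ < v.get ⟨i, hv⟩

end BetaShift

open BetaShift

/-!
Raising every letter of `d` by one makes it admissible without changing its factor complexity, so
it suffices to show `|P(n)| = Φ_n(d)` whenever `d ∈ X_d`. Pad words with zeros and write
`G(w) = {t | pad w ⪯ σ^t d}`. Whether `s ++ w` lies in the language depends on `w` only through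
`G(w)`: each shift of `s ++ pad w` starting inside `s` is compared with `d` letter by letter until
`s` runs out, and then `pad w` is compared with a shift of `d`. If `u` is the factor of `d` of
length `n` with `pad u` least among those with starting position in `G(w)`, then `G(w) = G(u)`,
so every predecessor set is that of a factor. Conversely the prefix `d[0, t)` precedes the factor
`u = d[t, t + n)`, and it precedes `u'` only if `pad u' ⪯ pad u`; hence distinct factors have
distinct predecessor sets.
-/

namespace BetaShift

open Stream'

section Sequences

variable {A : Type*}

theorem shift_iterate (x : ℕ → A) (i : ℕ) : shift^[i] x = drop i x := by
  induction i generalizing x with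
  | zero => rfl
  | succ i ih => exact (Function.iterate_succ_apply shift i x).trans (ih _)

def factor (x : Stream' A) (t n : ℕ) : List A := (drop t x).take n

@[simp]
theorem length_factor (x : Stream' A) (t n : ℕ) : (factor x t n).length = n := length_take _ _

@[simp]
theorem getElem_factor (x : Stream' A) (t n : ℕ) {j : ℕ} (h : j < (factor x t n).length) :
    (factor x t n)[j] = x (t + j) :=
  (take_get (h := h)).trans (get_drop _ _ _)

theorem occurs_iff {w : List A} {x : Stream' A} : Occurs w x ↔ ∃ t, factor x t w.length = w := by
  refine exists_congr fun t => ⟨fun h => ?_, fun h j => ?_⟩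
  · refine List.ext_getElem (length_take _ _) fun j _ hj => ?_
    rw [getElem_factor]
    exact h ⟨j, hj⟩
  · simpa [h] using (getElem_factor x t w.length (j := j) (by simp)).symm

theorem setOf_occurs_eq_range (x : Stream' A) (n : ℕ) :
    {w : List A | w.length = n ∧ Occurs w x} = Set.range (factor x · n) := by
  ext w
  simp only [Set.mem_ofPred_eq, Set.mem_range, occurs_iff]
  constructor
  · rintro ⟨rfl, t, ht⟩
    exact ⟨t, ht⟩
  · rintro ⟨t, rfl⟩
    exact ⟨length_factor x t n, t, by rw [length_factor]⟩

theorem complexity_map {B : Type*} {f : A → B} (hf : Function.Injective f) (x : Stream' A)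
    (n : ℕ) : Complexity (map f x) n = Complexity x n := by
  have hfactor : (factor (map f x) · n) = List.map f ∘ (factor x · n) := by
    funext t
    simp only [factor, Function.comp_apply, map_take, drop_map]
  unfold Complexity
  rw [setOf_occurs_eq_range, setOf_occurs_eq_range, hfactor, Set.range_comp]
  exact (List.map_injective_iff.2 hf).injOn.ncard_image

end Sequences

section LexOrder

variable {A : Type*} [LinearOrder A]

theorem seqLe_iff_toLex_le {x y : ℕ → A} : SeqLe x y ↔ toLex x ≤ toLex y := by
  rw [le_iff_eq_or_lt, toLex_inj]
  rfl

theorem seqLe_refl (x : ℕ → A) : SeqLe x x := Or.inl rfl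

theorem SeqLe.trans {x y z : ℕ → A} (hxy : SeqLe x y) (hyz : SeqLe y z) : SeqLe x z := by
  rw [seqLe_iff_toLex_le] at *
  exact hxy.trans hyz

theorem SeqLe.antisymm {x y : ℕ → A} (hxy : SeqLe x y) (hyx : SeqLe y x) : x = y := by
  rw [seqLe_iff_toLex_le] at *
  exact toLex_inj.1 (le_antisymm hxy hyx)

theorem seqLe_of_le {x y : ℕ → A} (h : x ≤ y) : SeqLe x y :=
  seqLe_iff_toLex_le.2 (Pi.toLex_monotone h)

variable {x y z : Stream' A}

theorem seqLe_map_iff {B : Type*} [LinearOrder B] {f : A → B} (hf : StrictMono f) :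
    SeqLe (map f x) (map f y) ↔ SeqLe x y := by
  exact or_congr ⟨fun h => funext fun j => hf.injective (congrFun h j), congrArg (map f)⟩
    (exists_congr fun i => and_congr (forall₂_congr fun j _ => hf.injective.eq_iff)
      hf.lt_iff_lt)

theorem seqLe_cons_iff {a b : A} :
    SeqLe (a :: x) (b :: y) ↔ a < b ∨ a = b ∧ SeqLe x y := by
  constructor
  · rintro (h | ⟨_ | i, hagr, hlt⟩)
    · obtain ⟨rfl, rfl⟩ := cons_injective2 h
      exact Or.inr ⟨rfl, seqLe_refl x⟩
    · exact Or.inl hlt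
    · exact Or.inr ⟨hagr 0 i.succ_pos, Or.inr ⟨i, fun j hj => hagr (j + 1) (by omega), hlt⟩⟩
  · rintro (hlt | ⟨rfl, rfl | ⟨i, hagr, hlt⟩⟩)
    · exact Or.inr ⟨0, fun _ h => absurd h (Nat.not_lt_zero _), hlt⟩
    · exact seqLe_refl _
    · refine Or.inr ⟨i + 1, fun j hj => ?_, hlt⟩
      rcases j with _ | j
      exacts [rfl, hagr j (by omega)]

theorem seqLe_append_iff {u v : List A} (h : u.length = v.length) :
    SeqLe (u ++ₛ y) (v ++ₛ z) ↔ u < v ∨ u = v ∧ SeqLe y z := by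
  induction u generalizing v with
  | nil =>
    obtain rfl := List.length_eq_zero_iff.1 h.symm
    simp
  | cons a u ih =>
    obtain ⟨b, v, rfl⟩ := List.exists_cons_of_length_eq_add_one h.symm
    rw [cons_append_stream, cons_append_stream, seqLe_cons_iff, ih (by simpa using h),
      List.cons_lt_cons_iff, List.cons.injEq]
    tauto

theorem seqLe_append_left_iff {u : List A} : SeqLe (u ++ₛ y) (u ++ₛ z) ↔ SeqLe y z := by
  simp [seqLe_append_iff rfl]

end LexOrder

section Language

variable {m : ℕ} {d : Stream' (Fin m)}

theorem mem_xSet_iff {x : Stream' (Fin m)} : x ∈ XSet d ↔ ∀ i, SeqLe (drop i x) d :=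
  forall_congr' fun i => iff_of_eq (congrArg (SeqLe · d) (shift_iterate x i))

theorem drop_mem_xSet {x : Stream' (Fin m)} (hx : x ∈ XSet d) (i : ℕ) : drop i x ∈ XSet d := by
  rw [mem_xSet_iff] at *
  intro j
  simpa [drop_drop] using hx (i + j)

theorem factor_mem_lang (hd : d ∈ XSet d) (t n : ℕ) : factor d t n ∈ Lang d :=
  ⟨d, hd, occurs_iff.2 ⟨t, by rw [length_factor]⟩⟩

theorem map_mem_xSet_map {m' : ℕ} {f : Fin m → Fin m'} (hf : StrictMono f) {x : Stream' (Fin m)}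
    (hx : x ∈ XSet d) : map f x ∈ XSet (map f d) := by
  rw [mem_xSet_iff] at *
  intro i
  rw [drop_map, seqLe_map_iff hf]
  exact hx i

theorem append_mem_xSet {u : List (Fin m)} {y y' : Stream' (Fin m)} (hy' : y' ∈ XSet d)
    (hyy' : ∀ t, SeqLe y (drop t d) → SeqLe y' (drop t d)) (hx : u ++ₛ y ∈ XSet d) :
    u ++ₛ y' ∈ XSet d := by
  rw [mem_xSet_iff] at *
  intro i
  rcases le_or_gt i u.length with hi | hi
  · have hxi := hx i
    rw [drop_append_of_le_length _ _ _ hi, ← append_take_drop (u.drop i).length d,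
      seqLe_append_iff (length_take _ _).symm] at hxi ⊢
    exact hxi.imp_right (And.imp_right (hyy' _))
  · obtain ⟨j, rfl⟩ := Nat.exists_eq_add_of_le hi.le
    rw [← drop_drop, drop_append_stream]
    exact hy' j

variable [NeZero m]

theorem const_zero_seqLe (x : Stream' (Fin m)) : SeqLe (const 0) x :=
  seqLe_of_le fun _ => Fin.zero_le _

theorem const_zero_mem_xSet : const 0 ∈ XSet d :=
  mem_xSet_iff.2 fun i => by rw [drop_const]; exact const_zero_seqLe d

def pad (w : List (Fin m)) : Stream' (Fin m) := w ++ₛ const 0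

theorem mem_lang_iff {w : List (Fin m)} : w ∈ Lang d ↔ pad w ∈ XSet d := by
  constructor
  · rintro ⟨x, hx, hw⟩
    obtain ⟨t, ht⟩ := occurs_iff.1 hw
    have hxt := drop_mem_xSet hx t
    have hsplit : w ++ₛ drop w.length (drop t x) = drop t x := by
      nth_rw 1 [← ht]
      exact append_take_drop _ _
    rw [← hsplit] at hxt
    exact append_mem_xSet const_zero_mem_xSet (fun _ _ => const_zero_seqLe _) hxt
  · intro hw
    refine ⟨pad w, hw, occurs_iff.2 ⟨0, ?_⟩⟩
    rw [factor, drop_zero, pad, take_append_of_le_length _ _ _ le_rfl, List.take_length]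

theorem mem_pred_iff {s w : List (Fin m)} : s ∈ Pred d w ↔ s ++ₛ pad w ∈ XSet d := by
  show s ++ w ∈ Lang d ↔ _
  rw [mem_lang_iff, pad, pad, append_append_stream]

theorem pred_subset_pred {w w' : List (Fin m)} (hw' : w' ∈ Lang d)
    (h : ∀ t, SeqLe (pad w) (drop t d) → SeqLe (pad w') (drop t d)) :
    Pred d w ⊆ Pred d w' := fun s hs => by
  rw [mem_pred_iff] at *
  exact append_mem_xSet (mem_lang_iff.1 hw') h hs

theorem seqLe_pad_iff {w : List (Fin m)} {x : Stream' (Fin m)} :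
    SeqLe (pad w) x ↔ SeqLe (pad w) (pad (x.take w.length)) := by
  conv_lhs => rw [← append_take_drop w.length x]
  rw [pad, pad, seqLe_append_iff (length_take _ _).symm, seqLe_append_iff (length_take _ _).symm]
  simp only [const_zero_seqLe, and_true]

theorem pad_take_seqLe (x : Stream' (Fin m)) (n : ℕ) : SeqLe (pad (x.take n)) x := by
  rw [seqLe_pad_iff, length_take]
  exact seqLe_refl _

theorem take_mem_pred_factor (hd : d ∈ XSet d) (t n : ℕ) : d.take t ∈ Pred d (factor d t n) := by
  rw [mem_pred_iff]
  refine append_mem_xSet (y := drop t d) (mem_lang_iff.1 (factor_mem_lang hd t n))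
    (fun _ hs => (pad_take_seqLe _ n).trans hs) ?_
  rwa [append_take_drop]

theorem seqLe_drop_of_take_mem_pred {w : List (Fin m)} {t : ℕ} (h : d.take t ∈ Pred d w) :
    SeqLe (pad w) (drop t d) := by
  have h0 : SeqLe (d.take t ++ₛ pad w) (d.take t ++ₛ drop t d) := by
    rw [append_take_drop]
    exact mem_xSet_iff.1 (mem_pred_iff.1 h) 0
  exact seqLe_append_left_iff.1 h0

theorem exists_pred_eq_pred_factor (hd : d ∈ XSet d) {w : List (Fin m)} (hw : w ∈ Lang d) :
    ∃ t, Pred d w = Pred d (factor d t w.length) := by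
  set n := w.length
  obtain ⟨_, ⟨t₀, ht₀, rfl⟩, hmin⟩ := Set.exists_min_image
    ((factor d · n) '' {t | SeqLe (pad w) (drop t d)}) (fun u => toLex (α := ℕ → Fin m) (pad u))
    ((List.finite_length_eq _ n).subset (by rintro _ ⟨t, _, rfl⟩; exact length_factor d t n))
    ⟨_, 0, mem_xSet_iff.1 (mem_lang_iff.1 hw) 0, rfl⟩
  refine ⟨t₀, (pred_subset_pred (factor_mem_lang hd t₀ n) fun t ht => ?_).antisymm
    (pred_subset_pred hw fun t ht => ?_)⟩
  · exact (seqLe_iff_toLex_le.2 (hmin _ ⟨t, ht, rfl⟩)).trans (pad_take_seqLe _ _)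
  · exact (seqLe_pad_iff.1 ht₀).trans ht

theorem factor_eq_of_pred_eq (hd : d ∈ XSet d) {t₁ t₂ n : ℕ}
    (h : Pred d (factor d t₁ n) = Pred d (factor d t₂ n)) : factor d t₁ n = factor d t₂ n := by
  have key : ∀ {t t'}, Pred d (factor d t n) = Pred d (factor d t' n) →
      SeqLe (pad (factor d t' n)) (pad (factor d t n)) := fun h => by
    have := seqLe_drop_of_take_mem_pred (h ▸ take_mem_pred_factor hd _ n)
    rwa [seqLe_pad_iff, length_factor] at this
  exact append_left_injective _ _ _ _ ((key h.symm).antisymm (key h)) (by simp)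

theorem predCount_eq_complexity (hd : d ∈ XSet d) (n : ℕ) : PredCount d n = Complexity d n := by
  have himage : {S | ∃ w ∈ Lang d, w.length = n ∧ S = Pred d w} =
      Pred d '' Set.range (factor d · n) := by
    ext S
    constructor
    · rintro ⟨w, hw, rfl, rfl⟩
      obtain ⟨t, ht⟩ := exists_pred_eq_pred_factor hd hw
      exact ⟨_, ⟨t, rfl⟩, ht.symm⟩
    · rintro ⟨_, ⟨t, rfl⟩, rfl⟩
      exact ⟨_, factor_mem_lang hd t n, length_factor d t n, rfl⟩
  unfold PredCount Complexity
  rw [himage, setOf_occurs_eq_range]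
  refine Set.InjOn.ncard_image ?_
  rintro _ ⟨t₁, rfl⟩ _ ⟨t₂, rfl⟩ h
  exact factor_eq_of_pred_eq hd h

end Language

end BetaShift

theorem stmt11_general (m : ℕ) (d : ℕ → Fin m)
    (hshift : ∀ i : ℕ, SeqLe (shift^[i] d) d) :
    ∃ m' : ℕ, 1 ≤ m' ∧ ∃ d' : ℕ → Fin m', Admissible d' ∧
      ∀ n, 1 ≤ n → PredCount d' n = Complexity d n := by
  have hd' : Stream'.map Fin.succ d ∈ XSet (Stream'.map Fin.succ d) :=
    map_mem_xSet_map Fin.strictMono_succ hshift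
  exact ⟨m + 1, m.succ_pos, _, ⟨hd', fun N => ⟨N, le_rfl, Nat.succ_ne_zero _⟩⟩, fun n _ =>
    (predCount_eq_complexity hd' n).trans (complexity_map (Fin.succ_injective m) d n)⟩

/-- any complexity sequence of a sequence all of whose shifts are ⪯
itself is the predecessor set sequence of some β-shift. -/
theorem stmt11 (m : ℕ) (hm : 1 ≤ m) (d : ℕ → Fin m)
    (hshift : ∀ i : ℕ, SeqLe (shift^[i] d) d) :
    ∃ m' : ℕ, 1 ≤ m' ∧ ∃ d' : ℕ → Fin m', Admissible d' ∧
      ∀ n, 1 ≤ n → PredCount d' n = Complexity d n :=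
  stmt11_general m d hshift
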